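/- arXiv:2003.01350 — 4 statements merged into one kernel-verified Lean document; each statement's English description precedes it below -/
import Mathlib

section
/- The random variables X_1, …, X_n are pairwise independent, and each X_k has distribution F (the mixture (1 − ℓ⁻¹)F_U + ℓ⁻¹F_V). -/
open MeasureTheory ProbabilityTheory
open scoped ENNReal

/-- Codomain family for the joint family `(M₁,…,M_m, U₁,…,U_n, V₁,…,V_n)`:
the `M`'s take values in `Fin ℓ` and the `U`'s and `V`'s take values in `ℝ`. -/
def pairwiseCod (ℓ m n : ℕ) : Fin m ⊕ (Fin n ⊕ Fin n) → Type :=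
  fun i => match i with
  | Sum.inl _ => Fin ℓ
  | Sum.inr _ => ℝ

/-- The natural measurable-space structure on each codomain. -/
def pairwiseCodMS (ℓ m n : ℕ) : ∀ i, MeasurableSpace (pairwiseCod ℓ m n i) :=
  fun i => match i with
  | Sum.inl _ => inferInstanceAs (MeasurableSpace (Fin ℓ))
  | Sum.inr _ => inferInstanceAs (MeasurableSpace ℝ)

/-- The joint family of random variables `(M₁,…,M_m, U₁,…,U_n, V₁,…,V_n)`. -/
def pairwiseJoint {Ω : Type*} {ℓ m n : ℕ} (M : Fin m → Ω → Fin ℓ) (U V : Fin n → Ω → ℝ) :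
    ∀ i, Ω → pairwiseCod ℓ m n i :=
  fun i => match i with
  | Sum.inl j => M j
  | Sum.inr (Sum.inl k) => U k
  | Sum.inr (Sum.inr k) => V k

/-!
For a pair `i < j` the event `{M_i = M_j}` has probability `ℓ⁻¹`: the uniform `M_j` hits any
target independent of it with probability `ℓ⁻¹`. Two distinct pairs `{i, j}`, `{i', j'}` leave
an index `a ∈ {i', j'}` outside `{i, j}`, and the same argument applied to `M_a` against the
σ-algebra of the other `M`'s shows that `{M_i = M_j}` and `{M_i' = M_j'}` are independent.
Together with the independence of the `M`'s from the `U`'s and `V`'s, the four σ-algebras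
`σ(D_k)`, `σ(D_k')`, `σ(U_k, V_k)`, `σ(U_k', V_k')` are then jointly independent, and
`X_k`, `X_k'` are measurable with respect to disjoint groups of them. Splitting
`{X_k ∈ A}` along `D_k` gives the mixture law.
-/

open MeasurableSpace

namespace ProbabilityTheory

variable {Ω : Type*} {mΩ : MeasurableSpace Ω} {μ : Measure Ω}

lemma isPiSystem_image2_inter (m₁ m₂ : MeasurableSpace Ω) :
    IsPiSystem (Set.image2 (· ∩ ·) {s | MeasurableSet[m₁] s} {t | MeasurableSet[m₂] t}) := by
  rintro _ ⟨s, hs, t, ht, rfl⟩ _ ⟨s', hs', t', ht', rfl⟩ -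
  exact ⟨s ∩ s', hs.inter hs', t ∩ t', ht.inter ht', (Set.inter_inter_inter_comm s t s' t').symm⟩

lemma generateFrom_image2_inter (m₁ m₂ : MeasurableSpace Ω) :
    generateFrom (Set.image2 (· ∩ ·) {s | MeasurableSet[m₁] s} {t | MeasurableSet[m₂] t})
      = m₁ ⊔ m₂ := by
  refine le_antisymm (generateFrom_le ?_) (sup_le (fun s hs => ?_) (fun t ht => ?_))
  · rintro _ ⟨s, hs, t, ht, rfl⟩
    exact (le_sup_left (b := m₂) s hs).inter (le_sup_right (a := m₁) t ht)
  · exact measurableSet_generateFrom ⟨s, hs, Set.univ, MeasurableSet.univ, Set.inter_univ s⟩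
  · exact measurableSet_generateFrom ⟨Set.univ, MeasurableSet.univ, t, ht, Set.univ_inter t⟩

lemma indep_sup_sup_of_indep_sup [IsZeroOrProbabilityMeasure μ] {m₁ m₂ m₃ m₄ : MeasurableSpace Ω}
    (h₁ : m₁ ≤ mΩ) (h₂ : m₂ ≤ mΩ) (h₃ : m₃ ≤ mΩ) (h₄ : m₄ ≤ mΩ)
    (h₁₂ : Indep m₁ m₂ μ) (h₃₄ : Indep m₃ m₄ μ) (h : Indep (m₁ ⊔ m₂) (m₃ ⊔ m₄) μ) :
    Indep (m₁ ⊔ m₃) (m₂ ⊔ m₄) μ := by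
  refine IndepSets.indep (sup_le h₁ h₃) (sup_le h₂ h₄) (isPiSystem_image2_inter m₁ m₃)
    (isPiSystem_image2_inter m₂ m₄) (generateFrom_image2_inter m₁ m₃).symm
    (generateFrom_image2_inter m₂ m₄).symm ?_
  rw [IndepSets_iff]
  rintro _ _ ⟨s₁, hs₁, t₃, ht₃, rfl⟩ ⟨s₂, hs₂, t₄, ht₄, rfl⟩
  have hsplit : ∀ {s t}, MeasurableSet[m₁ ⊔ m₂] s → MeasurableSet[m₃ ⊔ m₄] t →
      μ (s ∩ t) = μ s * μ t := (Indep_iff _ _ μ).1 h _ _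
  have h₁₂' : MeasurableSet[m₁ ⊔ m₂] (s₁ ∩ s₂) :=
    (le_sup_left (b := m₂) _ hs₁).inter (le_sup_right (a := m₁) _ hs₂)
  have h₃₄' : MeasurableSet[m₃ ⊔ m₄] (t₃ ∩ t₄) :=
    (le_sup_left (b := m₄) _ ht₃).inter (le_sup_right (a := m₃) _ ht₄)
  rw [Set.inter_inter_inter_comm, hsplit h₁₂' h₃₄',
    (Indep_iff _ _ μ).1 h₁₂ _ _ hs₁ hs₂, (Indep_iff _ _ μ).1 h₃₄ _ _ ht₃ ht₄,
    hsplit (le_sup_left (b := m₂) _ hs₁) (le_sup_left (b := m₄) _ ht₃),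
    hsplit (le_sup_right (a := m₁) _ hs₂) (le_sup_right (a := m₃) _ ht₄)]
  ring

lemma measure_setOf_eq_inter_of_indep {α : Type*} [MeasurableSpace α]
    [MeasurableSingletonClass α] [Countable α] {𝓕 : MeasurableSpace Ω} (h𝓕 : 𝓕 ≤ mΩ)
    {Z Y : Ω → α} {p : ℝ≥0∞} (hZ : Measurable[mΩ] Z) (hY : Measurable[𝓕] Y)
    (hind : Indep (MeasurableSpace.comap Z inferInstance) 𝓕 μ) (hp : ∀ c, μ {ω | Z ω = c} = p)
    {E : Set Ω} (hE : MeasurableSet[𝓕] E) :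
    μ ({ω | Z ω = Y ω} ∩ E) = p * μ E := by
  have hfiber : ∀ c, MeasurableSet[𝓕] (Y ⁻¹' {c} ∩ E) :=
    fun c => (hY (measurableSet_singleton c)).inter hE
  calc μ ({ω | Z ω = Y ω} ∩ E) = μ (⋃ c, Z ⁻¹' {c} ∩ (Y ⁻¹' {c} ∩ E)) := by
        congr 1; ext ω; simp [eq_comm]
    _ = ∑' c, μ (Z ⁻¹' {c}) * μ (Y ⁻¹' {c} ∩ E) := by
        rw [measure_iUnion]
        · exact tsum_congr fun c =>
            (Indep_iff _ _ μ).1 hind _ _ ⟨{c}, measurableSet_singleton c, rfl⟩ (hfiber c)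
        · exact fun c c' hcc' => ((pairwise_disjoint_fiber Z) hcc').mono
            Set.inter_subset_left Set.inter_subset_left
        · exact fun c => (hZ (measurableSet_singleton c)).inter (h𝓕 _ (hfiber c))
    _ = p * μ (⋃ c, Y ⁻¹' {c} ∩ E) := by
        simp_rw [Set.preimage, Set.mem_singleton_iff, hp]
        rw [ENNReal.tsum_mul_left, measure_iUnion]
        · exact fun c c' hcc' => ((pairwise_disjoint_fiber Y) hcc').mono
            Set.inter_subset_left Set.inter_subset_left
        · exact fun c => h𝓕 _ (hfiber c)
    _ = p * μ E := by
        rw [← Set.iUnion_inter, ← Set.preimage_iUnion, Set.iUnion_of_singleton, Set.preimage_univ,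
          Set.univ_inter]

lemma measure_piecewise_preimage_of_indep {β : Type*} [MeasurableSpace β] {D : Set Ω}
    [DecidablePred (· ∈ D)] (hD : MeasurableSet[mΩ] D) {𝓕 : MeasurableSpace Ω}
    (hind : Indep (generateFrom {D}) 𝓕 μ)
    {U V : Ω → β} (hU : Measurable[𝓕] U) (hV : Measurable[𝓕] V) (h𝓕 : 𝓕 ≤ mΩ)
    {A : Set β} (hA : MeasurableSet A) :
    μ (D.piecewise V U ⁻¹' A) = μ D * μ (V ⁻¹' A) + μ Dᶜ * μ (U ⁻¹' A) := by
  have hD' : MeasurableSet[generateFrom {D}] D := measurableSet_generateFrom rfl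
  rw [Set.piecewise_preimage, Set.ite, Set.sdiff_eq, measure_union
    (disjoint_compl_right.mono Set.inter_subset_right Set.inter_subset_right)
    ((h𝓕 _ (hU hA)).inter hD.compl),
    Set.inter_comm, (Indep_iff _ _ μ).1 hind _ _ hD' (hV hA), Set.inter_comm,
    (Indep_iff _ _ μ).1 hind _ _ hD'.compl (hU hA)]

lemma measurable_piecewise_generateFrom_sup {β : Type*} [MeasurableSpace β] {D : Set Ω}
    [DecidablePred (· ∈ D)] {𝓕 : MeasurableSpace Ω} {U V : Ω → β} (hU : Measurable[𝓕] U)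
    (hV : Measurable[𝓕] V) : Measurable[generateFrom {D} ⊔ 𝓕] (D.piecewise V U) :=
  Measurable.piecewise (le_sup_left (b := 𝓕) _ (measurableSet_generateFrom rfl))
    (hV.mono le_sup_right le_rfl) (hU.mono le_sup_right le_rfl)

lemma indepFun_piecewise_of_indep [IsZeroOrProbabilityMeasure μ] {β : Type*} [MeasurableSpace β]
    {D D' : Set Ω} [DecidablePred (· ∈ D)] [DecidablePred (· ∈ D')]
    (hD : MeasurableSet[mΩ] D) (hD' : MeasurableSet[mΩ] D') {𝓕 𝓕' : MeasurableSpace Ω}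
    (h𝓕 : 𝓕 ≤ mΩ) (h𝓕' : 𝓕' ≤ mΩ) (hDD' : IndepSet D D' μ) (h𝓕𝓕' : Indep 𝓕 𝓕' μ)
    (h : Indep (generateFrom {D} ⊔ generateFrom {D'}) (𝓕 ⊔ 𝓕') μ)
    {U V U' V' : Ω → β} (hU : Measurable[𝓕] U) (hV : Measurable[𝓕] V)
    (hU' : Measurable[𝓕'] U') (hV' : Measurable[𝓕'] V') :
    IndepFun (D.piecewise V U) (D'.piecewise V' U') μ := by
  rw [IndepFun_iff_Indep]
  refine indep_of_indep_of_le (indep_sup_sup_of_indep_sup ?_ ?_ h𝓕 h𝓕'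
    ((IndepSet_iff_Indep _ _ _).1 hDD') h𝓕𝓕' h)
    (measurable_piecewise_generateFrom_sup hU hV).comap_le
    (measurable_piecewise_generateFrom_sup hU' hV').comap_le
  · exact generateFrom_le (by simpa using hD)
  · exact generateFrom_le (by simpa using hD')

section iIndepFun

variable {ι α : Type*} [MeasurableSpace α] {M : ι → Ω → α} {p : ℝ≥0∞} {a b : ι}

lemma indep_comap_iSup_comap_of_iIndepFun (hM : ∀ i, Measurable (M i)) (hind : iIndepFun M μ) :
    Indep (MeasurableSpace.comap (M a) inferInstance)
      (⨆ t ∈ ({a}ᶜ : Set ι), MeasurableSpace.comap (M t) inferInstance) μ :=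
  indep_of_indep_of_le_left
    (indep_iSup_of_disjoint (fun t => (hM t).comap_le) ((iIndepFun_iff_iIndep _ _ _).1 hind)
      (disjoint_compl_right (a := ({a} : Set ι))))
    (le_iSup₂ (f := fun t (_ : t ∈ ({a} : Set ι)) => MeasurableSpace.comap (M t) inferInstance)
      a rfl)

lemma measurable_iSup_comap {s : Set ι} {i : ι} (hi : i ∈ s) :
    Measurable[⨆ t ∈ s, MeasurableSpace.comap (M t) inferInstance] (M i) :=
  Measurable.of_comap_le (le_iSup₂ (f := fun t (_ : t ∈ s) => MeasurableSpace.comap (M t) _) i hi)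

lemma measure_setOf_eq_of_iIndepFun [MeasurableSingletonClass α] [Countable α]
    [IsProbabilityMeasure μ] (hM : ∀ i, Measurable (M i))
    (hind : iIndepFun M μ) (hp : ∀ c, μ {ω | M a ω = c} = p) (hb : b ≠ a) :
    μ {ω | M a ω = M b ω} = p := by
  simpa using measure_setOf_eq_inter_of_indep (iSup₂_le fun t _ => (hM t).comap_le) (hM a)
    (measurable_iSup_comap (Set.mem_compl_singleton_iff.2 hb))
    (indep_comap_iSup_comap_of_iIndepFun hM hind) hp MeasurableSet.univ

lemma indepSet_setOf_eq_of_iIndepFun [MeasurableSingletonClass α] [Countable α]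
    (hM : ∀ i, Measurable (M i)) (hind : iIndepFun M μ)
    (hp : ∀ c, μ {ω | M a ω = c} = p) {i j : ι} (hi : i ≠ a) (hj : j ≠ a) (hb : b ≠ a) :
    IndepSet {ω | M i ω = M j ω} {ω | M a ω = M b ω} μ := by
  have := hind.isProbabilityMeasure
  have hle := iSup₂_le (f := fun t (_ : t ∈ ({a}ᶜ : Set ι)) => MeasurableSpace.comap (M t) _)
    fun t _ => (hM t).comap_le
  have hD := measurableSet_eq_fun (measurable_iSup_comap (Set.mem_compl_singleton_iff.2 hi))
    (measurable_iSup_comap (M := M) (Set.mem_compl_singleton_iff.2 hj))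
  rw [indepSet_iff_measure_inter_eq_mul (hle _ hD) (measurableSet_eq_fun (hM a) (hM b)) μ,
    Set.inter_comm, measure_setOf_eq_inter_of_indep hle (hM a)
      (measurable_iSup_comap (Set.mem_compl_singleton_iff.2 hb))
      (indep_comap_iSup_comap_of_iIndepFun hM hind) hp hD,
    measure_setOf_eq_of_iIndepFun hM hind hp hb, mul_comm]

lemma indepSet_setOf_eq_of_lt [MeasurableSingletonClass α] [Countable α] [LinearOrder ι]
    (hM : ∀ i, Measurable (M i)) (hind : iIndepFun M μ) (hp : ∀ t c, μ {ω | M t ω = c} = p)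
    {i j i' j' : ι} (hij : i < j) (hij' : i' < j') (hne : (i, j) ≠ (i', j')) :
    IndepSet {ω | M i ω = M j ω} {ω | M i' ω = M j' ω} μ := by
  by_cases hi' : i ≠ i' ∧ j ≠ i'
  · exact indepSet_setOf_eq_of_iIndepFun hM hind (hp i') hi'.1 hi'.2 hij'.ne'
  · have hj' : i ≠ j' ∧ j ≠ j' := by grind
    have hcomm : {ω | M i' ω = M j' ω} = {ω | M j' ω = M i' ω} := Set.ext fun ω => eq_comm
    rw [hcomm]
    exact indepSet_setOf_eq_of_iIndepFun hM hind (hp j') hj'.1 hj'.2 hij'.ne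

end iIndepFun

section pairwiseJoint

variable {ℓ m n : ℕ} {M : Fin m → Ω → Fin ℓ} {U V : Fin n → Ω → ℝ}

lemma measurable_pairwiseJoint (hM : ∀ j, Measurable (M j)) (hU : ∀ k, Measurable (U k))
    (hV : ∀ k, Measurable (V k)) (i : Fin m ⊕ (Fin n ⊕ Fin n)) :
    Measurable[mΩ, pairwiseCodMS ℓ m n i] (pairwiseJoint M U V i) := by
  rcases i with j | k | k
  exacts [hM j, hU k, hV k]

lemma iIndepFun.of_pairwiseJoint
    (hindep : iIndepFun (m := pairwiseCodMS ℓ m n) (pairwiseJoint M U V) μ) :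
    iIndepFun M μ :=
  hindep.precomp (g := Sum.inl) Sum.inl_injective

lemma indep_generateFrom_sup_of_pairwiseJoint (hM : ∀ j, Measurable (M j))
    (hU : ∀ k, Measurable (U k)) (hV : ∀ k, Measurable (V k))
    (hindep : iIndepFun (m := pairwiseCodMS ℓ m n) (pairwiseJoint M U V) μ)
    (i j i' j' : Fin m) (k k' : Fin n) :
    Indep (generateFrom {{ω | M i ω = M j ω}} ⊔ generateFrom {{ω | M i' ω = M j' ω}})
      ((MeasurableSpace.comap (U k) inferInstance ⊔ MeasurableSpace.comap (V k) inferInstance) ⊔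
        (MeasurableSpace.comap (U k') inferInstance ⊔ MeasurableSpace.comap (V k') inferInstance))
      μ := by
  have hM' : ∀ t, Measurable[⨆ i ∈ Set.range Sum.inl,
      MeasurableSpace.comap (pairwiseJoint M U V i) (pairwiseCodMS ℓ m n i)] (M t) :=
    fun t => Measurable.of_comap_le (le_iSup₂_of_le (Sum.inl t) ⟨t, rfl⟩ le_rfl)
  have hUV : ∀ k, MeasurableSpace.comap (U k) inferInstance ⊔
      MeasurableSpace.comap (V k) inferInstance ≤
        ⨆ i ∈ Set.range Sum.inr,
          MeasurableSpace.comap (pairwiseJoint M U V i) (pairwiseCodMS ℓ m n i) := fun k =>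
    sup_le (le_iSup₂_of_le (Sum.inr (Sum.inl k)) ⟨Sum.inl k, rfl⟩ le_rfl)
      (le_iSup₂_of_le (Sum.inr (Sum.inr k)) ⟨Sum.inr k, rfl⟩ le_rfl)
  refine indep_of_indep_of_le
    (indep_iSup_of_disjoint (fun i => (measurable_pairwiseJoint hM hU hV i).comap_le)
      ((iIndepFun_iff_iIndep _ _ _).1 hindep) Set.isCompl_range_inl_range_inr.disjoint)
    (sup_le (generateFrom_le ?_) (generateFrom_le ?_)) (sup_le (hUV k) (hUV k'))
  · simpa using measurableSet_eq_fun (hM' i) (hM' j)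
  · simpa using measurableSet_eq_fun (hM' i') (hM' j')

lemma measure_piecewise_setOf_eq_preimage (hM : ∀ j, Measurable (M j))
    (hU : ∀ k, Measurable (U k)) (hV : ∀ k, Measurable (V k))
    (hindep : iIndepFun (m := pairwiseCodMS ℓ m n) (pairwiseJoint M U V) μ) {p : ℝ≥0∞}
    (hp : ∀ j c, μ {ω | M j ω = c} = p) {i j : Fin m} (hij : i ≠ j) (k : Fin n) {A : Set ℝ}
    (hA : MeasurableSet A) :
    μ ({ω | M i ω = M j ω}.piecewise (V k) (U k) ⁻¹' A)
      = p * μ (V k ⁻¹' A) + (1 - p) * μ (U k ⁻¹' A) := by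
  have := hindep.isProbabilityMeasure
  have hD := measurableSet_eq_fun (hM i) (hM j)
  rw [measure_piecewise_preimage_of_indep hD
    (indep_of_indep_of_le (indep_generateFrom_sup_of_pairwiseJoint hM hU hV hindep i j i j k k)
      le_sup_left le_sup_left)
    (Measurable.of_comap_le le_sup_left) (Measurable.of_comap_le le_sup_right)
    (sup_le (hU k).comap_le (hV k).comap_le) hA, prob_compl_eq_one_sub hD,
    measure_setOf_eq_of_iIndepFun hM (iIndepFun.of_pairwiseJoint hindep) (hp i) hij.symm]

lemma indepFun_piecewise_setOf_eq (hM : ∀ j, Measurable (M j))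
    (hU : ∀ k, Measurable (U k)) (hV : ∀ k, Measurable (V k))
    (hindep : iIndepFun (m := pairwiseCodMS ℓ m n) (pairwiseJoint M U V) μ) {p : ℝ≥0∞}
    (hp : ∀ j c, μ {ω | M j ω = c} = p) {i j i' j' : Fin m} (hij : i < j) (hij' : i' < j')
    (hne : (i, j) ≠ (i', j')) {k k' : Fin n} (hkk' : k ≠ k') :
    IndepFun ({ω | M i ω = M j ω}.piecewise (V k) (U k))
      ({ω | M i' ω = M j' ω}.piecewise (V k') (U k')) μ := by
  have := hindep.isProbabilityMeasure
  have hUV := indep_iSup_of_disjoint (fun i => (measurable_pairwiseJoint hM hU hV i).comap_le)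
    ((iIndepFun_iff_iIndep _ _ _).1 hindep)
    (S := {Sum.inr (Sum.inl k), Sum.inr (Sum.inr k)})
    (T := {Sum.inr (Sum.inl k'), Sum.inr (Sum.inr k')}) (by simp [hkk'.symm])
  rw [iSup_pair, iSup_pair] at hUV
  exact indepFun_piecewise_of_indep (measurableSet_eq_fun (hM i) (hM j))
    (measurableSet_eq_fun (hM i') (hM j')) (sup_le (hU k).comap_le (hV k).comap_le)
    (sup_le (hU k').comap_le (hV k').comap_le)
    (indepSet_setOf_eq_of_lt hM (iIndepFun.of_pairwiseJoint hindep) hp hij hij' hne) hUV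
    (indep_generateFrom_sup_of_pairwiseJoint hM hU hV hindep i j i' j' k k')
    (Measurable.of_comap_le le_sup_left) (Measurable.of_comap_le le_sup_right)
    (Measurable.of_comap_le le_sup_left) (Measurable.of_comap_le le_sup_right)

end pairwiseJoint

end ProbabilityTheory

theorem statement0_general
    {Ω : Type*} [MeasureSpace Ω]
    (ℓ : ℕ) (m : ℕ) (n : ℕ)
    (μU μV : Measure ℝ)
    (F : Measure ℝ) (hF : F = (1 - (ℓ : ℝ≥0∞)⁻¹) • μU + (ℓ : ℝ≥0∞)⁻¹ • μV)
    (M : Fin m → Ω → Fin ℓ) (U V : Fin n → Ω → ℝ)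
    (hMmeas : ∀ j, Measurable (M j))
    (hUmeas : ∀ k, Measurable (U k)) (hVmeas : ∀ k, Measurable (V k))
    (hMunif : ∀ j c, ℙ {ω | M j ω = c} = (ℓ : ℝ≥0∞)⁻¹)
    (hUlaw : ∀ k, Measure.map (U k) ℙ = μU) (hVlaw : ∀ k, Measure.map (V k) ℙ = μV)
    (hindep : iIndepFun (m := pairwiseCodMS ℓ m n) (pairwiseJoint M U V) ℙ)
    (e : Fin n ≃ {q : Fin m × Fin m // q.1 < q.2})
    (X : Fin n → Ω → ℝ)
    (hX : ∀ k ω, X k ω = if M (e k).1.1 ω = M (e k).1.2 ω then V k ω else U k ω) :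
    (∀ k k' : Fin n, k ≠ k' → IndepFun (X k) (X k') ℙ) ∧
      ∀ k, Measure.map (X k) ℙ = F := by
  have hXD : ∀ k, X k = {ω | M (e k).1.1 ω = M (e k).1.2 ω}.piecewise (V k) (U k) :=
    fun k => funext fun ω => by simp [hX, Set.piecewise]
  refine ⟨fun k k' hkk' => ?_, fun k => Measure.ext fun A hA => ?_⟩
  · rw [hXD, hXD]
    exact indepFun_piecewise_setOf_eq hMmeas hUmeas hVmeas hindep hMunif (e k).2 (e k').2
      (fun h => hkk' (e.injective (Subtype.ext h))) hkk'
  · have hXk : Measurable (X k) := hXD k ▸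
      (hVmeas k).piecewise (measurableSet_eq_fun (hMmeas _) (hMmeas _)) (hUmeas k)
    rw [Measure.map_apply hXk hA, hXD, measure_piecewise_setOf_eq_preimage hMmeas hUmeas hVmeas
      hindep hMunif (e k).2.ne k hA, ← Measure.map_apply (hVmeas k) hA,
      ← Measure.map_apply (hUmeas k) hA, hUlaw, hVlaw, hF]
    simp [add_comm]

/-- In the construction of the paper (with `M₁,…,M_m` i.i.d. uniform on
`{1,…,ℓ}`, `U₁,…,U_n` i.i.d. `∼ F_U`, `V₁,…,V_n` i.i.d. `∼ F_V`, the three families mutually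
independent, `D_k = 1{M_i = M_j}` for the `k`-th pair `(i,j)`, and `X_k = U_k` if `D_k = 0`,
`X_k = V_k` if `D_k = 1`), the random variables `X₁,…,X_n` are pairwise independent and each
`X_k` has distribution `F = (1 - ℓ⁻¹) F_U + ℓ⁻¹ F_V`. -/
theorem statement0
    {Ω : Type*} [MeasureSpace Ω] [IsProbabilityMeasure (ℙ : Measure Ω)]
    (ℓ : ℕ) (hℓ : 2 ≤ ℓ) (m : ℕ) (hm : 2 ≤ m) (n : ℕ) (hn : n = m * (m - 1) / 2)
    (μU μV : Measure ℝ) [IsProbabilityMeasure μU] [IsProbabilityMeasure μV]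
    (hU2 : MemLp id 2 μU) (hV2 : MemLp id 2 μV)
    (F : Measure ℝ) (hF : F = (1 - (ℓ : ℝ≥0∞)⁻¹) • μU + (ℓ : ℝ≥0∞)⁻¹ • μV)
    (hσpos : 0 < variance id F)
    (M : Fin m → Ω → Fin ℓ) (U V : Fin n → Ω → ℝ)
    (hMmeas : ∀ j, Measurable (M j))
    (hUmeas : ∀ k, Measurable (U k)) (hVmeas : ∀ k, Measurable (V k))
    (hMunif : ∀ j c, ℙ {ω | M j ω = c} = (ℓ : ℝ≥0∞)⁻¹)
    (hUlaw : ∀ k, Measure.map (U k) ℙ = μU) (hVlaw : ∀ k, Measure.map (V k) ℙ = μV)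
    (hindep : iIndepFun (m := pairwiseCodMS ℓ m n) (pairwiseJoint M U V) ℙ)
    (e : Fin n ≃ {q : Fin m × Fin m // q.1 < q.2})
    (X : Fin n → Ω → ℝ)
    (hX : ∀ k ω, X k ω = if M (e k).1.1 ω = M (e k).1.2 ω then V k ω else U k ω) :
    (∀ k k' : Fin n, k ≠ k' → IndepFun (X k) (X k') ℙ) ∧
      ∀ k, Measure.map (X k) ℙ = F :=
  statement0_general ℓ m n μU μV F hF M U V hMmeas hUmeas hVmeas hMunif hUlaw hVlaw hindep e X hX
end

section
/- For every t ∈ ℝ, the characteristic function of S equals exp(−(1 − r²)t²/2) · exp(−i t r √((ℓ−1)/2)) · (1 − i t r √(2/(ℓ−1)))^{−(ℓ−1)/2}, where the complex power is taken with the principal branch. -/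
/-!
The characteristic function of a gamma law comes from analytic continuation: for real `t < b` the
moment generating function of `Γ(a, b)` is the elementary integral `(1 - t / b) ^ (-a)`, both it
and the principal-branch power `(1 - z / b) ^ (-a)` are holomorphic on the half plane `re z < b`,
so they agree there, in particular on the imaginary axis. Writing
`S = √(1 - r²) Z + r / √(2(ℓ - 1)) Γ - r √((ℓ - 1) / 2)`, independence factorises its
characteristic function into a Gaussian factor, a gamma factor with `a = (ℓ - 1) / 2`, `b = 1 / 2`,
and the phase of the shift.
-/

open MeasureTheory ProbabilityTheory Set Filter
open scoped Topology

lemma Real.div_sqrt_mul_eq_sqrt_div {x : ℝ} (hx : 0 ≤ x) (y : ℝ) :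
    x / Real.sqrt (y * x) = Real.sqrt (x / y) := by
  rw [Real.sqrt_mul' y hx, div_mul_eq_div_div_swap, Real.div_sqrt, Real.sqrt_div hx y]

namespace ProbabilityTheory

open Complex

lemma IndepFun.charFun_map_mul_add_mul_add_const {Ω : Type*} [MeasurableSpace Ω]
    {P : Measure Ω} [IsFiniteMeasure P] {X Y : Ω → ℝ} (hX : Measurable X) (hY : Measurable Y)
    (hXY : IndepFun X Y P) (c d e t : ℝ) :
    charFun (P.map fun ω ↦ c * X ω + d * Y ω + e) t =
      charFun (P.map X) (c * t) * charFun (P.map Y) (d * t) * cexp (e * t * I) := by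
  have hcd : IndepFun (fun ω ↦ c * X ω) (fun ω ↦ d * Y ω) P :=
    hXY.comp (measurable_const_mul c) (measurable_const_mul d)
  rw [show (fun ω ↦ c * X ω + d * Y ω + e) = (· + e) ∘ fun ω ↦ c * X ω + d * Y ω from rfl,
    ← Measure.map_map (measurable_add_const e) (by fun_prop), charFun_map_add_const,
    hcd.charFun_map_fun_add_eq_mul (by fun_prop) (by fun_prop), Pi.mul_apply,
    charFun_map_mul_comp hX.aemeasurable, charFun_map_mul_comp hY.aemeasurable,
    RCLike.inner_apply, conj_trivial, ofReal_mul, mul_comm (t : ℂ)]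

variable {a b : ℝ}

lemma gammaPDFReal_of_neg {x : ℝ} (hx : x < 0) : gammaPDFReal a b x = 0 := by
  rw [gammaPDFReal, if_neg hx.not_ge]

lemma gammaPDFReal_mul_exp_of_pos {t x : ℝ} (hx : 0 < x) :
    gammaPDFReal a b x * Real.exp (t * x) =
      b ^ a / Real.Gamma a * (x ^ (a - 1) * Real.exp (-((b - t) * x))) := by
  rw [gammaPDFReal, if_pos hx.le, mul_assoc, mul_assoc, ← Real.exp_add]
  ring_nf

lemma toReal_gammaPDF (ha : 0 < a) (hb : 0 < b) (x : ℝ) :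
    (gammaPDF a b x).toReal = gammaPDFReal a b x :=
  ENNReal.toReal_ofReal (gammaPDFReal_nonneg ha hb x)

section Integral

variable {E : Type*} [NormedAddCommGroup E] [NormedSpace ℝ E]

lemma integral_gammaMeasure (ha : 0 < a) (hb : 0 < b) (f : ℝ → E) :
    ∫ x, f x ∂gammaMeasure a b = ∫ x in Ioi 0, gammaPDFReal a b x • f x := by
  rw [gammaMeasure, integral_withDensity_eq_integral_toReal_smul (f := gammaPDF a b)
    (measurable_gammaPDFReal a b).ennreal_ofReal (ae_of_all _ fun _ ↦ ENNReal.ofReal_lt_top),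
    ← integral_Ici_eq_integral_Ioi, setIntegral_eq_integral_of_forall_compl_eq_zero]
  · simp_rw [toReal_gammaPDF ha hb]
  · intro x hx
    rw [gammaPDFReal_of_neg (not_le.1 hx), zero_smul]

lemma integrable_gammaMeasure (ha : 0 < a) (hb : 0 < b) {f : ℝ → E}
    (hf : IntegrableOn (fun x ↦ gammaPDFReal a b x • f x) (Ioi 0)) :
    Integrable f (gammaMeasure a b) := by
  rw [gammaMeasure, integrable_withDensity_iff_integrable_smul' (f := gammaPDF a b)
    (measurable_gammaPDFReal a b).ennreal_ofReal (ae_of_all _ fun _ ↦ ENNReal.ofReal_lt_top)]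
  simp_rw [toReal_gammaPDF ha hb]
  rw [← integrableOn_Ici_iff_integrableOn_Ioi] at hf
  refine (integrableOn_iff_integrable_of_support_subset
    (Function.support_subset_iff'.2 fun x hx ↦ ?_)).1 hf
  rw [gammaPDFReal_of_neg (not_le.1 hx), zero_smul]

end Integral

lemma integrableOn_gammaPDFReal_mul_exp (ha : 0 < a) {t : ℝ} (ht : t < b) :
    IntegrableOn (fun x ↦ gammaPDFReal a b x * Real.exp (t * x)) (Ioi 0) := by
  have h := (integrableOn_rpow_mul_exp_neg_mul_rpow (s := a - 1) (by linarith) one_pos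
    (sub_pos.2 ht)).const_mul (b ^ a / Real.Gamma a)
  refine IntegrableOn.congr_fun h (fun x hx ↦ ?_) measurableSet_Ioi
  rw [gammaPDFReal_mul_exp_of_pos hx, Real.rpow_one, neg_mul]

lemma Iio_subset_integrableExpSet_gammaMeasure (ha : 0 < a) (hb : 0 < b) :
    Iio b ⊆ integrableExpSet id (gammaMeasure a b) := fun _ ht ↦
  integrable_gammaMeasure ha hb (integrableOn_gammaPDFReal_mul_exp ha ht)

lemma mgf_id_gammaMeasure (ha : 0 < a) (hb : 0 < b) {t : ℝ} (ht : t < b) :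
    mgf id (gammaMeasure a b) t = (1 - t / b) ^ (-a) := by
  have hbt : 0 < b - t := sub_pos.2 ht
  have h0 : 0 ≤ 1 - t / b := by rw [sub_nonneg, div_le_one hb]; exact ht.le
  rw [mgf, integral_gammaMeasure ha hb]
  simp_rw [id, smul_eq_mul]
  rw [setIntegral_congr_fun measurableSet_Ioi fun x hx ↦ gammaPDFReal_mul_exp_of_pos hx,
    integral_const_mul, Real.integral_rpow_mul_exp_neg_mul_Ioi ha hbt,
    Real.rpow_neg h0, ← Real.inv_rpow h0,
    show (1 - t / b)⁻¹ = 1 / (b - t) * b by field_simp [hbt.ne', hb.ne'],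
    Real.mul_rpow (by positivity) hb.le]
  field_simp [(Real.Gamma_pos_of_pos ha).ne']

lemma complexMGF_id_gammaMeasure (ha : 0 < a) (hb : 0 < b) {z : ℂ} (hz : z.re < b) :
    complexMGF id (gammaMeasure a b) z = (1 - z / b) ^ (-(a : ℂ)) := by
  have hU : IsOpen {z : ℂ | z.re < b} := isOpen_lt continuous_re continuous_const
  have hmgf : AnalyticOnNhd ℂ (complexMGF id (gammaMeasure a b)) {z : ℂ | z.re < b} :=
    analyticOnNhd_complexMGF.mono fun z hz ↦
      interior_mono (Iio_subset_integrableExpSet_gammaMeasure ha hb) (by rwa [interior_Iio])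
  have hpow : AnalyticOnNhd ℂ (fun z : ℂ ↦ (1 - z / b) ^ (-(a : ℂ))) {z : ℂ | z.re < b} := by
    refine DifferentiableOn.analyticOnNhd (fun z hz ↦ ?_) hU
    refine (DifferentiableAt.cpow_const (by fun_prop) (Or.inl ?_)).differentiableWithinAt
    rw [sub_re, one_re, div_ofReal_re, sub_pos, div_lt_one hb]
    exact hz
  have hreal : ∀ᶠ x : ℝ in 𝓝[≠] 0,
      complexMGF id (gammaMeasure a b) x = (1 - x / b : ℂ) ^ (-(a : ℂ)) := by
    refine eventually_nhdsWithin_of_eventually_nhds ((eventually_lt_nhds hb).mono fun x hx ↦ ?_)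
    rw [complexMGF_ofReal, mgf_id_gammaMeasure ha hb hx,
      ofReal_cpow (by rw [sub_nonneg, div_le_one hb]; exact hx.le), ofReal_neg, ofReal_sub,
      ofReal_one, ofReal_div]
  have hofReal : Tendsto ofReal (𝓝[≠] 0) (𝓝[≠] 0) := by
    simpa using continuous_ofReal.continuousWithinAt.tendsto_nhdsWithin
      (x := (0 : ℝ)) (t := {0}ᶜ) fun _ _ ↦ by simp_all
  exact hmgf.eqOn_of_preconnected_of_frequently_eq hpow
    (convex_halfSpace_re_lt b).isPreconnected (z₀ := 0) (by simpa using hb)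
    (hofReal.frequently hreal.frequently) hz

lemma charFun_gammaMeasure (ha : 0 < a) (hb : 0 < b) (t : ℝ) :
    charFun (gammaMeasure a b) t = (1 - t * I / b) ^ (-(a : ℂ)) := by
  rw [← complexMGF_id_mul_I, complexMGF_id_gammaMeasure ha hb (by simpa using hb)]

lemma IndepFun.charFun_map_mul_add_mul_add_const_gaussianReal_gammaMeasure {Ω : Type*}
    [MeasurableSpace Ω] {P : Measure Ω} [IsFiniteMeasure P] {X Y : Ω → ℝ} (hX : Measurable X)
    (hY : Measurable Y) (hXY : IndepFun X Y P) (hXlaw : P.map X = gaussianReal 0 1)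
    (hYlaw : P.map Y = gammaMeasure a b) (ha : 0 < a) (hb : 0 < b) (c d e t : ℝ) :
    charFun (P.map fun ω ↦ c * X ω + d * Y ω + e) t =
      cexp (-(c * t) ^ 2 / 2) * (1 - d * t * I / b) ^ (-(a : ℂ)) * cexp (e * t * I) := by
  rw [hXY.charFun_map_mul_add_mul_add_const hX hY, hXlaw, hYlaw, charFun_gaussianReal,
    charFun_gammaMeasure ha hb]
  push_cast
  ring_nf

end ProbabilityTheory

/-- Let `Z ∼ N(0,1)` and, independently, `Γ ∼ χ²_{ℓ-1}` (the Gamma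
distribution with shape `(ℓ-1)/2` and rate `1/2`); set `χ = (Γ - (ℓ-1))/√(2(ℓ-1))` and
`S = √(1 - r²) Z + r χ`. Then for every `t ∈ ℝ` the characteristic function of `S` equals
`exp(-(1 - r²)t²/2) ⬝ exp(-itr√((ℓ-1)/2)) ⬝ (1 - itr√(2/(ℓ-1)))^{-(ℓ-1)/2}`,
the complex power being the principal branch. -/
theorem statement2
    {Ω : Type*} [MeasureSpace Ω] [IsProbabilityMeasure (ℙ : Measure Ω)]
    (ℓ : ℕ) (hℓ : 2 ≤ ℓ) (r : ℝ) (hr : r ^ 2 ≤ 1)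
    (Z G : Ω → ℝ) (hZmeas : Measurable Z) (hGmeas : Measurable G)
    (hZ : Measure.map Z ℙ = gaussianReal 0 1)
    (hG : Measure.map G ℙ = gammaMeasure (((ℓ : ℝ) - 1) / 2) (1 / 2))
    (hindep : IndepFun Z G ℙ)
    (χ S : Ω → ℝ)
    (hχ : ∀ ω, χ ω = (G ω - ((ℓ : ℝ) - 1)) / Real.sqrt (2 * ((ℓ : ℝ) - 1)))
    (hS : ∀ ω, S ω = Real.sqrt (1 - r ^ 2) * Z ω + r * χ ω) :
    ∀ t : ℝ,
      (∫ ω, Complex.exp (Complex.I * (t : ℂ) * (S ω : ℂ)) ∂ℙ) =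
        Complex.exp (-(1 - (r : ℂ) ^ 2) * (t : ℂ) ^ 2 / 2) *
          Complex.exp (-Complex.I * (t : ℂ) * (r : ℂ) *
            (Real.sqrt (((ℓ : ℝ) - 1) / 2) : ℂ)) *
          (1 - Complex.I * (t : ℂ) * (r : ℂ) * (Real.sqrt (2 / ((ℓ : ℝ) - 1)) : ℂ)) ^
            (-(((ℓ : ℕ) : ℂ) - 1) / 2) := by
  intro t
  set L : ℝ := (ℓ : ℝ) - 1 with hL_def
  have hL : 0 < L := by
    have : (2 : ℝ) ≤ ℓ := by exact_mod_cast hℓ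
    linarith
  have hS_affine : S = fun ω ↦ Real.sqrt (1 - r ^ 2) * Z ω + r / Real.sqrt (2 * L) * G ω +
      -(r * Real.sqrt (L / 2)) := by
    ext ω
    rw [hS, hχ, ← Real.div_sqrt_mul_eq_sqrt_div hL.le]
    ring
  have hvar : (Real.sqrt (1 - r ^ 2) : ℂ) ^ 2 = 1 - (r : ℂ) ^ 2 := by
    rw [← Complex.ofReal_pow, Real.sq_sqrt (by linarith)]
    push_cast
    ring
  have hbase : 1 - (r / Real.sqrt (2 * L) : ℝ) * (t : ℂ) * Complex.I / ((1 / 2 : ℝ) : ℂ) =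
      1 - Complex.I * t * r * (Real.sqrt (2 / L) : ℂ) := by
    rw [← Real.div_sqrt_mul_eq_sqrt_div zero_le_two, mul_comm L]
    push_cast
    ring
  have hshape : -((L / 2 : ℝ) : ℂ) = -((ℓ : ℂ) - 1) / 2 := by
    rw [hL_def]
    push_cast
    ring
  calc ∫ ω, Complex.exp (Complex.I * t * S ω) ∂ℙ = charFun (Measure.map S ℙ) t := by
        rw [charFun_apply_real, integral_map (by rw [hS_affine]; fun_prop) (by fun_prop)]
        congr with ω
        ring_nf
    _ = _ := by
        rw [hS_affine, hindep.charFun_map_mul_add_mul_add_const_gaussianReal_gammaMeasure hZmeas hGmeas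
          hZ hG (by positivity) (by norm_num), hbase, hshape, mul_right_comm]
        congr 3
        · linear_combination (-(t : ℂ) ^ 2 / 2) * hvar
        · push_cast
          ring
end

section
/- Since r² ≤ 1, the third and fourth moments of S satisfy |E[S³]| ≤ √(8/(ℓ−1)) and E[S⁴] ≤ 3 + 12/(ℓ−1). -/
/-!
`S` is the sum of the independent centred variables `√(1 - r²) Z` and `r χ`, so in the binomial
expansion of `E[S³]` and `E[S⁴]` every term containing a first power of either summand vanishes:
`E[S³] = (1 - r²)^{3/2} E[Z³] + r³ E[χ³]` and
`E[S⁴] = (1 - r²)² E[Z⁴] + 6 (1 - r²) r² + r⁴ E[χ⁴]`.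
The raw moments of the chi-squared law with `k` degrees of freedom are `k (k + 2) ⋯ (k + 2n - 2)`
(multiplying the gamma density by `x ^ n` only shifts its shape), which gives `E[χ³] = √(8/k)` and
`E[χ⁴] = 3 + 12/k`; with `E[Z³] = 0` and `E[Z⁴] = 3` this yields `E[S³] = r³ √(8/k)` and
`E[S⁴] = 3 + 12 r⁴/k`.
-/

open MeasureTheory ProbabilityTheory Real Finset
open scoped NNReal Nat

section Moments

variable {Ω : Type*} {mΩ : MeasurableSpace Ω} {μ : Measure Ω} {X Y : Ω → ℝ} {n : ℕ}

lemma integrable_sub_pow (hX : ∀ m ≤ n, Integrable (fun ω ↦ X ω ^ m) μ) (c : ℝ) :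
    Integrable (fun ω ↦ (X ω - c) ^ n) μ := by
  simp_rw [sub_eq_add_neg, add_pow]
  exact integrable_finsetSum _ fun m hm ↦
    ((hX m (mem_range_succ_iff.mp hm)).mul_const _).mul_const _

lemma integral_sub_pow_eq_sum (hX : ∀ m ≤ n, Integrable (fun ω ↦ X ω ^ m) μ) (c : ℝ) :
    ∫ ω, (X ω - c) ^ n ∂μ =
      ∑ m ∈ range (n + 1), (∫ ω, X ω ^ m ∂μ) * (-c) ^ (n - m) * n.choose m := by
  simp_rw [sub_eq_add_neg, add_pow]
  rw [integral_finsetSum _ fun m hm ↦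
    ((hX m (mem_range_succ_iff.mp hm)).mul_const _).mul_const _]
  simp_rw [integral_mul_const]

lemma integral_add_pow_eq_sum_of_indepFun (hXY : IndepFun X Y μ)
    (hX : ∀ m ≤ n, Integrable (fun ω ↦ X ω ^ m) μ)
    (hY : ∀ m ≤ n, Integrable (fun ω ↦ Y ω ^ m) μ) :
    ∫ ω, (X ω + Y ω) ^ n ∂μ =
      ∑ m ∈ range (n + 1), (∫ ω, X ω ^ m ∂μ) * (∫ ω, Y ω ^ (n - m) ∂μ) * n.choose m := by
  have hpow (i j : ℕ) : IndepFun (fun ω ↦ X ω ^ i) (fun ω ↦ Y ω ^ j) μ :=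
    hXY.comp (measurable_id.pow_const i) (measurable_id.pow_const j)
  simp_rw [add_pow]
  rw [integral_finsetSum]
  · refine sum_congr rfl fun m hm ↦ ?_
    rw [integral_mul_const, (hpow m (n - m)).integral_fun_mul_eq_mul_integral
      (hX m (mem_range_succ_iff.mp hm)).aestronglyMeasurable
      (hY _ (Nat.sub_le n m)).aestronglyMeasurable]
  · exact fun m hm ↦ ((hpow m (n - m)).integrable_mul (hX m (mem_range_succ_iff.mp hm))
      (hY _ (Nat.sub_le n m))).mul_const _

variable [IsProbabilityMeasure μ]

lemma integral_mul_add_mul_pow_three_of_indepFun (hXY : IndepFun X Y μ)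
    (hX : ∀ m ≤ 3, Integrable (fun ω ↦ X ω ^ m) μ) (hY : ∀ m ≤ 3, Integrable (fun ω ↦ Y ω ^ m) μ)
    (hX₀ : ∫ ω, X ω ∂μ = 0) (hY₀ : ∫ ω, Y ω ∂μ = 0) (a b : ℝ) :
    ∫ ω, (a * X ω + b * Y ω) ^ 3 ∂μ = a ^ 3 * ∫ ω, X ω ^ 3 ∂μ + b ^ 3 * ∫ ω, Y ω ^ 3 ∂μ := by
  rw [integral_add_pow_eq_sum_of_indepFun (X := fun ω ↦ a * X ω) (Y := fun ω ↦ b * Y ω)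
    (hXY.comp (measurable_const_mul a) (measurable_const_mul b))
    (fun m hm ↦ by simpa only [mul_pow] using (hX m hm).const_mul (a ^ m))
    (fun m hm ↦ by simpa only [mul_pow] using (hY m hm).const_mul (b ^ m))]
  simp [sum_range_succ, mul_pow, integral_const_mul, hX₀, hY₀, Nat.choose]
  ring

lemma integral_mul_add_mul_pow_four_of_indepFun (hXY : IndepFun X Y μ)
    (hX : ∀ m ≤ 4, Integrable (fun ω ↦ X ω ^ m) μ) (hY : ∀ m ≤ 4, Integrable (fun ω ↦ Y ω ^ m) μ)
    (hX₀ : ∫ ω, X ω ∂μ = 0) (hY₀ : ∫ ω, Y ω ∂μ = 0) (a b : ℝ) :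
    ∫ ω, (a * X ω + b * Y ω) ^ 4 ∂μ = a ^ 4 * ∫ ω, X ω ^ 4 ∂μ +
      6 * (a ^ 2 * ∫ ω, X ω ^ 2 ∂μ) * (b ^ 2 * ∫ ω, Y ω ^ 2 ∂μ) + b ^ 4 * ∫ ω, Y ω ^ 4 ∂μ := by
  rw [integral_add_pow_eq_sum_of_indepFun (X := fun ω ↦ a * X ω) (Y := fun ω ↦ b * Y ω)
    (hXY.comp (measurable_const_mul a) (measurable_const_mul b))
    (fun m hm ↦ by simpa only [mul_pow] using (hX m hm).const_mul (a ^ m))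
    (fun m hm ↦ by simpa only [mul_pow] using (hY m hm).const_mul (b ^ m))]
  simp [sum_range_succ, mul_pow, integral_const_mul, hX₀, hY₀, Nat.choose]
  ring

end Moments

namespace ProbabilityTheory.HasLaw

variable {Ω 𝓧 : Type*} {mΩ : MeasurableSpace Ω} {m𝓧 : MeasurableSpace 𝓧} {P : Measure Ω}
  {μ : Measure 𝓧} {X : Ω → 𝓧} {f : 𝓧 → ℝ}

lemma integrable_fun_comp (hX : HasLaw X μ P) (hf : Integrable f μ) :
    Integrable (fun ω ↦ f (X ω)) P :=
  (hX.map_eq ▸ hf).comp_aemeasurable hX.aemeasurable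

lemma integral_fun_comp (hX : HasLaw X μ P) (hf : AEStronglyMeasurable f μ) :
    ∫ ω, f (X ω) ∂P = ∫ x, f x ∂μ :=
  hX.integral_comp hf

end ProbabilityTheory.HasLaw

section Gaussian

lemma integrable_pow_gaussianReal (μ : ℝ) (v : ℝ≥0) (n : ℕ) :
    Integrable (fun x ↦ x ^ n) (gaussianReal μ v) := by
  have h : MemLp id n (gaussianReal μ v) := by simpa using memLp_id_gaussianReal (μ := μ) (v := v) n
  exact h.integrable_norm_pow'.mono' (by fun_prop) (.of_forall fun x ↦ by simp)

lemma integral_pow_gaussianReal_of_odd (v : ℝ≥0) {n : ℕ} (hn : Odd n) :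
    ∫ x, x ^ n ∂gaussianReal 0 v = 0 := by
  have h : ∫ x, x ^ n ∂gaussianReal 0 v = ∫ x, (-x) ^ n ∂gaussianReal 0 v := by
    conv_lhs => rw [← neg_zero, ← gaussianReal_map_neg, integral_map (by fun_prop) (by fun_prop)]
  simp_rw [hn.neg_pow, integral_neg] at h
  linarith

lemma integral_pow_two_mul_gaussianReal (m : ℕ) :
    ∫ x, x ^ (2 * m) ∂gaussianReal 0 1 = (2 * m - 1 : ℕ)‼ := by
  set f : ℝ → ℝ := fun y ↦ (√(2 * π))⁻¹ * (y ^ ((2 * m : ℕ) : ℝ) * exp (-(1 / 2) * y ^ (2 : ℝ)))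
  have hf : ∀ x, gaussianPDFReal 0 1 x • x ^ (2 * m) = f |x| := fun x ↦ by
    simp only [f, gaussianPDFReal, rpow_natCast, rpow_two, sq_abs, (even_two_mul m).pow_abs,
      NNReal.coe_one]
    ring_nf
  rw [integral_gaussianReal_eq_integral_smul one_ne_zero]
  simp_rw [hf]
  rw [integral_comp_abs, integral_const_mul, integral_rpow_mul_exp_neg_mul_rpow two_pos
    (neg_one_lt_zero.trans_le (Nat.cast_nonneg _)) one_half_pos]
  have h2 : (1 / 2 : ℝ) ^ (-(((2 * m : ℕ) : ℝ) + 1) / 2) = 2 ^ m * √2 := by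
    rw [one_div, inv_rpow zero_le_two, ← rpow_neg zero_le_two, sqrt_eq_rpow, ← rpow_natCast,
      ← rpow_add two_pos]
    congr 1; push_cast; ring
  have hΓ : Gamma ((((2 * m : ℕ) : ℝ) + 1) / 2) = (2 * m - 1 : ℕ)‼ * √π / 2 ^ m := by
    rw [← Gamma_nat_add_half]; congr 1; push_cast; ring
  rw [h2, hΓ, sqrt_mul zero_le_two]
  field_simp

end Gaussian

section Gamma

variable {E : Type*} [NormedAddCommGroup E] [NormedSpace ℝ E] {a r : ℝ}

lemma integral_gammaMeasure_eq_integral_smul (ha : 0 < a) (hr : 0 < r) (f : ℝ → E) :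
    ∫ x, f x ∂gammaMeasure a r = ∫ x, gammaPDFReal a r x • f x := by
  rw [gammaMeasure, integral_withDensity_eq_integral_toReal_smul (f := gammaPDF a r)
    (measurable_gammaPDFReal a r).ennreal_ofReal (.of_forall fun _ ↦ ENNReal.ofReal_lt_top)]
  simp [gammaPDF, ENNReal.toReal_ofReal (gammaPDFReal_nonneg ha hr _)]

lemma integrable_gammaMeasure_iff (ha : 0 < a) (hr : 0 < r) {f : ℝ → E} :
    Integrable f (gammaMeasure a r) ↔ Integrable (fun x ↦ gammaPDFReal a r x • f x) := by
  rw [gammaMeasure, integrable_withDensity_iff_integrable_smul' (f := gammaPDF a r)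
    (measurable_gammaPDFReal a r).ennreal_ofReal (.of_forall fun _ ↦ ENNReal.ofReal_lt_top)]
  simp [gammaPDF, ENNReal.toReal_ofReal (gammaPDFReal_nonneg ha hr _)]

lemma integrable_gammaPDFReal (ha : 0 < a) (hr : 0 < r) : Integrable (gammaPDFReal a r) := by
  have := isProbabilityMeasure_gammaMeasure ha hr
  simpa using (integrable_gammaMeasure_iff ha hr).mp (integrable_const (1 : ℝ))

lemma integral_gammaPDFReal (ha : 0 < a) (hr : 0 < r) : ∫ x, gammaPDFReal a r x = 1 := by
  have := isProbabilityMeasure_gammaMeasure ha hr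
  simpa using (integral_gammaMeasure_eq_integral_smul ha hr fun _ ↦ (1 : ℝ)).symm

lemma gammaPDFReal_mul_pow_ae_eq (ha : 0 < a) (hr : 0 < r) (n : ℕ) :
    (fun x ↦ gammaPDFReal a r x * x ^ n) =ᵐ[volume]
      fun x ↦ Gamma (a + n) / (Gamma a * r ^ n) * gammaPDFReal (a + n) r x := by
  filter_upwards [compl_mem_ae_iff.mpr (measure_singleton (0 : ℝ))] with x hx
  rcases (Set.mem_compl_singleton_iff.mp hx).lt_or_gt with hx | hx
  · simp [gammaPDFReal, hx.not_ge]
  · have := (Gamma_pos_of_pos ha).ne'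
    have := (Gamma_pos_of_pos (by positivity : 0 < a + n)).ne'
    simp only [gammaPDFReal, if_pos hx.le]
    rw [rpow_add hr, rpow_natCast, show a + n - 1 = (a - 1) + n by ring, rpow_add hx, rpow_natCast]
    field_simp

lemma integrable_pow_gammaMeasure (ha : 0 < a) (hr : 0 < r) (n : ℕ) :
    Integrable (fun x ↦ x ^ n) (gammaMeasure a r) :=
  (integrable_gammaMeasure_iff ha hr).mpr <|
    ((integrable_gammaPDFReal (by positivity) hr).const_mul _).congr
      (gammaPDFReal_mul_pow_ae_eq ha hr n).symm

lemma integral_pow_gammaMeasure (ha : 0 < a) (hr : 0 < r) (n : ℕ) :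
    ∫ x, x ^ n ∂gammaMeasure a r = Gamma (a + n) / (Gamma a * r ^ n) := by
  simp_rw [integral_gammaMeasure_eq_integral_smul ha hr, smul_eq_mul]
  rw [integral_congr_ae (gammaPDFReal_mul_pow_ae_eq ha hr n), integral_const_mul,
    integral_gammaPDFReal (by positivity) hr, mul_one]

end Gamma

section ChiSquared

noncomputable abbrev chiSquared (k : ℝ) : Measure ℝ := gammaMeasure (k / 2) (1 / 2)

variable {k : ℝ}

lemma integral_pow_chiSquared (hk : 0 < k) (n : ℕ) :
    ∫ x, x ^ n ∂chiSquared k = ∏ i ∈ range n, (k + 2 * i) := by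
  have := (Gamma_pos_of_pos (half_pos hk)).ne'
  induction n with
  | zero =>
    have := isProbabilityMeasure_gammaMeasure (half_pos hk) one_half_pos
    simp
  | succ n ih =>
    rw [prod_range_succ, ← ih, integral_pow_gammaMeasure (half_pos hk) one_half_pos,
      integral_pow_gammaMeasure (half_pos hk) one_half_pos, Nat.cast_succ, ← add_assoc,
      Gamma_add_one (by positivity)]
    field_simp
    ring

lemma integrable_standardized_pow_chiSquared (hk : 0 < k) (n : ℕ) :
    Integrable (fun x ↦ ((x - k) / √(2 * k)) ^ n) (chiSquared k) := by
  simp_rw [div_pow]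
  exact (integrable_sub_pow (fun m _ ↦ integrable_pow_gammaMeasure (half_pos hk) one_half_pos m)
    k).div_const _

lemma integral_standardized_pow_chiSquared (hk : 0 < k) (n : ℕ) :
    ∫ x, ((x - k) / √(2 * k)) ^ n ∂chiSquared k =
      (∑ m ∈ range (n + 1), (∏ i ∈ range m, (k + 2 * i)) * (-k) ^ (n - m) * n.choose m) /
        √(2 * k) ^ n := by
  simp_rw [div_pow, integral_div]
  rw [integral_sub_pow_eq_sum (X := fun x ↦ x)
    (fun m _ ↦ integrable_pow_gammaMeasure (half_pos hk) one_half_pos m)]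
  simp_rw [integral_pow_chiSquared hk]

lemma integral_standardized_chiSquared (hk : 0 < k) :
    ∫ x, (x - k) / √(2 * k) ∂chiSquared k = 0 := by
  simpa [sum_range_succ] using integral_standardized_pow_chiSquared hk 1

lemma integral_standardized_sq_chiSquared (hk : 0 < k) :
    ∫ x, ((x - k) / √(2 * k)) ^ 2 ∂chiSquared k = 1 := by
  rw [integral_standardized_pow_chiSquared hk, sq_sqrt (by positivity)]
  simp [sum_range_succ, prod_range_succ, Nat.choose]
  field_simp
  ring

lemma integral_standardized_pow_three_chiSquared (hk : 0 < k) :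
    ∫ x, ((x - k) / √(2 * k)) ^ 3 ∂chiSquared k = √(8 / k) := by
  have h2k : 0 < √(2 * k) := sqrt_pos.mpr (by positivity)
  rw [integral_standardized_pow_chiSquared hk, pow_succ, sq_sqrt (by positivity),
    show 8 / k = (4 / √(2 * k)) ^ 2 by rw [div_pow, sq_sqrt (by positivity)]; field_simp; ring,
    sqrt_sq (by positivity)]
  simp [sum_range_succ, prod_range_succ, Nat.choose]
  field_simp
  ring

lemma integral_standardized_pow_four_chiSquared (hk : 0 < k) :
    ∫ x, ((x - k) / √(2 * k)) ^ 4 ∂chiSquared k = 3 + 12 / k := by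
  rw [integral_standardized_pow_chiSquared hk, show 4 = 2 * 2 by rfl, pow_mul,
    sq_sqrt (by positivity)]
  simp [sum_range_succ, prod_range_succ, Nat.choose]
  field_simp
  ring

end ChiSquared

section GaussianAddChiSquared

variable {Ω : Type*} {mΩ : MeasurableSpace Ω} {P : Measure Ω} [IsProbabilityMeasure P]
  {Z G : Ω → ℝ} {k : ℝ}

lemma integral_pow_three_gaussian_add_standardized_chiSquared
    (hZ : HasLaw Z (gaussianReal 0 1) P) (hG : HasLaw G (chiSquared k) P) (hZG : IndepFun Z G P)
    (hk : 0 < k) (a b : ℝ) :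
    ∫ ω, (a * Z ω + b * ((G ω - k) / √(2 * k))) ^ 3 ∂P = b ^ 3 * √(8 / k) := by
  have hZχ : IndepFun Z (fun ω ↦ (G ω - k) / √(2 * k)) P :=
    hZG.comp measurable_id (show Measurable fun x ↦ (x - k) / √(2 * k) by fun_prop)
  rw [integral_mul_add_mul_pow_three_of_indepFun hZχ
    (fun m _ ↦ hZ.integrable_fun_comp (integrable_pow_gaussianReal 0 1 m))
    (fun m _ ↦ hG.integrable_fun_comp (integrable_standardized_pow_chiSquared hk m))
    (by rw [hZ.integral_eq, integral_id_gaussianReal])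
    (by rw [hG.integral_fun_comp (f := fun x ↦ (x - k) / √(2 * k)) (by fun_prop),
      integral_standardized_chiSquared hk]),
    hZ.integral_fun_comp (integrable_pow_gaussianReal 0 1 3).aestronglyMeasurable,
    hG.integral_fun_comp (integrable_standardized_pow_chiSquared hk 3).aestronglyMeasurable,
    integral_pow_gaussianReal_of_odd 1 (by decide), integral_standardized_pow_three_chiSquared hk]
  ring

lemma integral_pow_four_gaussian_add_standardized_chiSquared
    (hZ : HasLaw Z (gaussianReal 0 1) P) (hG : HasLaw G (chiSquared k) P) (hZG : IndepFun Z G P)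
    (hk : 0 < k) (a b : ℝ) :
    ∫ ω, (a * Z ω + b * ((G ω - k) / √(2 * k))) ^ 4 ∂P =
      3 * (a ^ 2 + b ^ 2) ^ 2 + 12 * b ^ 4 / k := by
  have hZ2 : ∫ x, x ^ 2 ∂gaussianReal 0 1 = 1 := by
    simpa using integral_pow_two_mul_gaussianReal 1
  have hZ4 : ∫ x, x ^ 4 ∂gaussianReal 0 1 = 3 := by
    simpa [Nat.doubleFactorial] using integral_pow_two_mul_gaussianReal 2
  have hZχ : IndepFun Z (fun ω ↦ (G ω - k) / √(2 * k)) P :=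
    hZG.comp measurable_id (show Measurable fun x ↦ (x - k) / √(2 * k) by fun_prop)
  rw [integral_mul_add_mul_pow_four_of_indepFun hZχ
    (fun m _ ↦ hZ.integrable_fun_comp (integrable_pow_gaussianReal 0 1 m))
    (fun m _ ↦ hG.integrable_fun_comp (integrable_standardized_pow_chiSquared hk m))
    (by rw [hZ.integral_eq, integral_id_gaussianReal])
    (by rw [hG.integral_fun_comp (f := fun x ↦ (x - k) / √(2 * k)) (by fun_prop),
      integral_standardized_chiSquared hk]),
    hZ.integral_fun_comp (integrable_pow_gaussianReal 0 1 2).aestronglyMeasurable,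
    hZ.integral_fun_comp (integrable_pow_gaussianReal 0 1 4).aestronglyMeasurable,
    hG.integral_fun_comp (integrable_standardized_pow_chiSquared hk 2).aestronglyMeasurable,
    hG.integral_fun_comp (integrable_standardized_pow_chiSquared hk 4).aestronglyMeasurable,
    hZ2, hZ4,
    integral_standardized_sq_chiSquared hk, integral_standardized_pow_four_chiSquared hk]
  ring

end GaussianAddChiSquared

/-- In the setting of the limit variable `S = √(1 - r²) Z + r χ` (with
`Z ∼ N(0,1)` independent of `Γ ∼ χ²_{ℓ-1}` and `χ = (Γ - (ℓ-1))/√(2(ℓ-1))`), since `r² ≤ 1`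
the third and fourth moments satisfy `|E[S³]| ≤ √(8/(ℓ-1))` and `E[S⁴] ≤ 3 + 12/(ℓ-1)`. -/
theorem statement11
    {Ω : Type*} [MeasureSpace Ω] [IsProbabilityMeasure (ℙ : Measure Ω)]
    (ℓ : ℕ) (hℓ : 2 ≤ ℓ) (r : ℝ) (hr : r ^ 2 ≤ 1)
    (Z G : Ω → ℝ) (hZmeas : Measurable Z) (hGmeas : Measurable G)
    (hZ : Measure.map Z ℙ = gaussianReal 0 1)
    (hG : Measure.map G ℙ = gammaMeasure (((ℓ : ℝ) - 1) / 2) (1 / 2))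
    (hindep : IndepFun Z G ℙ)
    (χ S : Ω → ℝ)
    (hχ : ∀ ω, χ ω = (G ω - ((ℓ : ℝ) - 1)) / Real.sqrt (2 * ((ℓ : ℝ) - 1)))
    (hS : ∀ ω, S ω = Real.sqrt (1 - r ^ 2) * Z ω + r * χ ω) :
    |∫ ω, (S ω) ^ 3 ∂ℙ| ≤ Real.sqrt (8 / ((ℓ : ℝ) - 1)) ∧
      (∫ ω, (S ω) ^ 4 ∂ℙ) ≤ 3 + 12 / ((ℓ : ℝ) - 1) := by
  have hk : 0 < (ℓ : ℝ) - 1 := by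
    have : (2 : ℝ) ≤ ℓ := by exact_mod_cast hℓ
    linarith
  have hZlaw : HasLaw Z (gaussianReal 0 1) ℙ := ⟨hZmeas.aemeasurable, hZ⟩
  have hGlaw : HasLaw G (chiSquared ((ℓ : ℝ) - 1)) ℙ := ⟨hGmeas.aemeasurable, hG⟩
  simp only [hS, hχ]
  rw [integral_pow_three_gaussian_add_standardized_chiSquared hZlaw hGlaw hindep hk,
    integral_pow_four_gaussian_add_standardized_chiSquared hZlaw hGlaw hindep hk,
    sq_sqrt (by linarith), sub_add_cancel, one_pow, mul_one]
  have hr4 : (r ^ 2) ^ 2 ≤ 1 := pow_le_one₀ (sq_nonneg r) hr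
  constructor
  · rw [abs_mul, abs_of_nonneg (sqrt_nonneg _), abs_pow]
    exact mul_le_of_le_one_left (sqrt_nonneg _)
      (pow_le_one₀ (abs_nonneg r) (sq_le_one_iff_abs_le_one r |>.mp hr))
  · gcongr
    linarith
end

section
/- For W = exp(√β · Z) with Z standard Gaussian and β > 0, take ℓ = 2 and A = [1, ∞); then the parameter r = (E[W | W ∈ A] − E[W])/√(Var(W)) equals (2Φ(√β) − 1)/√(exp(β) − 1), and r → 0 as β → ∞. -/
/-!
For `β > 0` the event `{1 ≤ W}` is `{Z ≥ 0}`, which has probability `1/2` by symmetry.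
Exponential tilting, `exp (t x) φ(x) = exp (t²/2) φ(x - t)`, turns `E[exp (t Z); Z ≥ 0]` into
`exp (t²/2) P(N(t, 1) ≥ 0) = exp (t²/2) Φ(t)`, while the moment generating function gives
`E W = exp (β/2)` and `Var W = exp β (exp β - 1)`. The factor `exp (β/2)` cancels in `r`,
and since `|2Φ - 1| ≤ 1` the limit comes from `√(exp β - 1) → ∞`.
-/

open MeasureTheory ProbabilityTheory Real Set Filter Topology
open scoped NNReal

lemma exp_mul_mul_gaussianPDFReal (μ : ℝ) {v : ℝ≥0} (hv : v ≠ 0) (t x : ℝ) :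
    exp (t * x) * gaussianPDFReal μ v x
      = exp (μ * t + v * t ^ 2 / 2) * gaussianPDFReal (μ + v * t) v x := by
  have hv' : (v : ℝ) ≠ 0 := by exact_mod_cast hv
  simp only [gaussianPDFReal]
  rw [mul_left_comm, ← exp_add, mul_left_comm (exp _), ← exp_add]
  congr 2
  field_simp
  ring

lemma setIntegral_exp_mul_gaussianReal (μ : ℝ) {v : ℝ≥0} (hv : v ≠ 0) (t : ℝ) {s : Set ℝ}
    (hs : MeasurableSet s) :
    ∫ x in s, exp (t * x) ∂gaussianReal μ v
      = exp (μ * t + v * t ^ 2 / 2) * (gaussianReal (μ + v * t) v).real s := by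
  rw [← integral_indicator hs, integral_gaussianReal_eq_integral_smul hv, measureReal_def,
    gaussianReal_apply_eq_integral _ hv, ENNReal.toReal_ofReal
      (setIntegral_nonneg hs fun x _ ↦ gaussianPDFReal_nonneg _ _ x),
    ← integral_const_mul, ← integral_indicator hs]
  congr 1 with x
  by_cases hx : x ∈ s <;> simp [hx, mul_comm (gaussianPDFReal μ v x),
    exp_mul_mul_gaussianPDFReal μ hv]

lemma gaussianReal_Ici_zero (μ : ℝ) (v : ℝ≥0) :
    gaussianReal μ v (Ici 0) = gaussianReal 0 v (Iic μ) := by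
  -- `N(μ, v)` is the law of `μ - Y` for `Y ∼ N(0, v)`
  nth_rw 1 [← zero_add μ, ← gaussianReal_map_add_const, ← neg_zero, ← gaussianReal_map_neg,
    Measure.map_map (by fun_prop) (by fun_prop), Measure.map_apply (by fun_prop) measurableSet_Ici]
  congr 1 with x
  simp [neg_add_eq_sub]

lemma gaussianReal_real_Ici_zero {v : ℝ≥0} (hv : v ≠ 0) :
    (gaussianReal 0 v).real (Ici 0) = 1 / 2 := by
  have := nullSingletonClass_gaussianReal (μ := 0) hv
  have hsymm : (gaussianReal 0 v).real (Ici 0) = (gaussianReal 0 v).real (Iio 0) := by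
    rw [measureReal_def, gaussianReal_Ici_zero, ← measureReal_def, measureReal_congr Iio_ae_eq_Iic]
  have hsum := measureReal_add_measureReal_compl (μ := gaussianReal 0 v)
    (measurableSet_Ici (a := (0 : ℝ)))
  rw [compl_Ici, ← hsymm, probReal_univ] at hsum
  linarith

section GaussianVariable

variable {Ω : Type*} [MeasurableSpace Ω] {P : Measure Ω} {X : Ω → ℝ}
  {μ : ℝ} {v : ℝ≥0}

lemma integral_exp_mul_of_map_eq_gaussianReal (hX : P.map X = gaussianReal μ v) (t : ℝ) :
    ∫ ω, exp (t * X ω) ∂P = exp (μ * t + v * t ^ 2 / 2) :=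
  mgf_gaussianReal hX t

lemma integrable_exp_mul_of_map_eq_gaussianReal [IsProbabilityMeasure P]
    (hX : P.map X = gaussianReal μ v) (t : ℝ) :
    Integrable (fun ω ↦ exp (t * X ω)) P := by
  rw [← mgf_pos_iff, mgf_gaussianReal hX]
  exact exp_pos _

lemma variance_exp_mul_of_map_eq_gaussianReal [IsProbabilityMeasure P] (hXm : Measurable X)
    (hX : P.map X = gaussianReal μ v) (t : ℝ) :
    variance (fun ω ↦ exp (t * X ω)) P
      = exp (2 * μ * t + v * t ^ 2) * (exp (v * t ^ 2) - 1) := by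
  have hsq : ∀ ω, exp (t * X ω) ^ 2 = exp (2 * t * X ω) := fun ω ↦ by
    rw [← exp_nat_mul]; ring_nf
  have hL2 : MemLp (fun ω ↦ exp (t * X ω)) 2 P := by
    rw [memLp_two_iff_integrable_sq (by fun_prop)]
    simpa only [hsq] using integrable_exp_mul_of_map_eq_gaussianReal hX (2 * t)
  rw [variance_eq_sub hL2]
  simp only [Pi.pow_apply, hsq, integral_exp_mul_of_map_eq_gaussianReal hX, ← exp_nat_mul,
    mul_sub, ← exp_add]
  ring_nf

lemma setIntegral_exp_mul_of_map_eq_gaussianReal (hXm : Measurable X)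
    (hX : P.map X = gaussianReal μ v) (hv : v ≠ 0) (t : ℝ) :
    ∫ ω in {ω | 0 ≤ X ω}, exp (t * X ω) ∂P
      = exp (μ * t + v * t ^ 2 / 2) * (gaussianReal 0 v).real (Iic (μ + v * t)) := by
  change ∫ ω in X ⁻¹' Ici 0, _ ∂P = _
  rw [← setIntegral_map (f := fun x ↦ exp (t * x)) measurableSet_Ici (by fun_prop)
      hXm.aemeasurable, hX,
    setIntegral_exp_mul_gaussianReal μ hv t measurableSet_Ici, measureReal_def,
    gaussianReal_Ici_zero, measureReal_def]

lemma integral_exp_mul_cond_nonneg_of_map_eq_gaussianReal (hXm : Measurable X)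
    (hX : P.map X = gaussianReal 0 v) (hv : v ≠ 0) (t : ℝ) :
    ∫ ω, exp (t * X ω) ∂P[|{ω | 0 ≤ X ω}]
      = 2 * exp (v * t ^ 2 / 2) * (gaussianReal 0 v).real (Iic (v * t)) := by
  have hhalf : P.real {ω | 0 ≤ X ω} = 1 / 2 := by
    rw [← gaussianReal_real_Ici_zero hv, ← hX, map_measureReal_apply hXm measurableSet_Ici]
    rfl
  rw [ProbabilityTheory.cond, integral_smul_measure, ENNReal.toReal_inv, ← measureReal_def, hhalf,
    setIntegral_exp_mul_of_map_eq_gaussianReal hXm hX hv]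
  simp only [zero_mul, zero_add, smul_eq_mul]
  ring

end GaussianVariable

lemma tendsto_inv_sqrt_exp_sub_one_atTop :
    Tendsto (fun x ↦ (√(exp x - 1))⁻¹) atTop (𝓝 0) :=
  tendsto_inv_atTop_zero.comp <| tendsto_sqrt_atTop.comp <|
    tendsto_atTop_add_const_right _ (-1) tendsto_exp_atTop

/-- For `W = exp(√β Z)` with `Z ∼ N(0,1)` and `β > 0`, take `ℓ = 2` and
`A = [1,∞)`; then `r = (E[W | W ∈ A] - E[W])/√(Var W) = (2Φ(√β) - 1)/√(exp(β) - 1)`, where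
`Φ` is the standard Gaussian CDF, and `r → 0` as `β → ∞`. -/
theorem statement15
    {Ω : Type*} [MeasureSpace Ω] [IsProbabilityMeasure (ℙ : Measure Ω)]
    (Z : Ω → ℝ) (hZmeas : Measurable Z) (hZ : Measure.map Z ℙ = gaussianReal 0 1)
    (W : ℝ → Ω → ℝ) (hW : ∀ β ω, W β ω = Real.exp (Real.sqrt β * Z ω))
    (Φ : ℝ → ℝ) (hΦ : ∀ x, Φ x = ((gaussianReal 0 1) (Set.Iic x)).toReal)
    (r : ℝ → ℝ)
    (hr : ∀ β, r β = ((∫ ω, W β ω ∂(ℙ[|{ω | 1 ≤ W β ω}])) - ∫ ω, W β ω ∂ℙ) /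
      Real.sqrt (variance (W β) ℙ)) :
    (∀ β, 0 < β →
        r β = (2 * Φ (Real.sqrt β) - 1) / Real.sqrt (Real.exp β - 1)) ∧
      Filter.Tendsto r Filter.atTop (nhds 0) := by
  have hr_eq : ∀ β, 0 < β → r β = (2 * Φ √β - 1) / √(exp β - 1) := by
    intro β hβ
    have hWβ : W β = fun ω ↦ exp (√β * Z ω) := funext (hW β)
    have hA : {ω | 1 ≤ W β ω} = {ω | 0 ≤ Z ω} := by
      ext ω
      simp [hWβ, one_le_exp_iff, mul_nonneg_iff_of_pos_left (sqrt_pos.2 hβ)]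
    rw [hr, hA, hWβ, integral_exp_mul_cond_nonneg_of_map_eq_gaussianReal hZmeas hZ one_ne_zero,
      integral_exp_mul_of_map_eq_gaussianReal hZ,
      variance_exp_mul_of_map_eq_gaussianReal hZmeas hZ, hΦ, ← measureReal_def]
    simp only [NNReal.coe_one, one_mul, zero_mul, mul_zero, zero_add, sq_sqrt hβ.le]
    rw [sqrt_mul (exp_nonneg β), ← exp_half]
    field_simp
  refine ⟨hr_eq, squeeze_zero_norm' ?_ tendsto_inv_sqrt_exp_sub_one_atTop⟩
  filter_upwards [eventually_gt_atTop 0] with β hβ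
  have hΦ_nonneg : 0 ≤ Φ √β := hΦ _ ▸ ENNReal.toReal_nonneg
  have hΦ_le_one : Φ √β ≤ 1 := hΦ _ ▸ measureReal_le_one
  rw [hr_eq β hβ, norm_div, norm_of_nonneg (sqrt_nonneg _), div_eq_mul_inv]
  exact mul_le_of_le_one_left (by positivity) (abs_le.2 ⟨by linarith, by linarith⟩)
end
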